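/- Assume k ≥ 3 and that the orbit masses satisfy π(O_1) ≤ … ≤ π(O_k) with π(O_k) > 1/2. Define the k×k matrix P̄ by: P̄(i,j) := 1 if i ≤ k−1 and j = k, P̄(i,j) := 0 if i ≤ k−1 and j ≤ k−1, P̄(k,j) := π(O_j)/π(O_k) for j ≤ k−1, and P̄(k,k) := 2 − 1/π(O_k). Then P̄ is a stochastic matrix, it is π̄-reversible (hence π̄-stationary) where π̄(i) := π(O_i), and its spectrum (set of eigenvalues over ℝ) equals {1, 0, 1 − 1/π(O_k)}. -/

import Mathlib

/-!
With `m = μ c` the mass of the hub `c`, the star matrix acts by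
`(P v) i = v c` for `i ≠ c` and `(P v) c = (1 - 1/m) v c + ⟨μ, v⟩ / m`.
Reversibility makes `μ` a left fixed vector, so `r ⟨μ, v⟩ = ⟨μ, v⟩` for an eigenvector `v`
with eigenvalue `r`. If `r ≠ 1` then `⟨μ, v⟩ = 0`, and the hub equation gives `r = 1 - 1/m`
unless `v c = 0`; in that case `r v i = v c = 0` off the hub forces `r = 0`.
Eigenvectors for the three values are `1`, a vector supported on two non-hub points
orthogonal to `μ`, and `1 - (1/m) e_c`.
-/

open Matrix Finset

noncomputable def orbMass {n k : ℕ} (π : Fin n → ℝ) (part : Fin n → Fin k) (i : Fin k) : ℝ :=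
  ∑ z ∈ Finset.univ.filter (fun z => part z = i), π z

theorem orbMass_pos {n k : ℕ} {π : Fin n → ℝ} (hπ : ∀ x, 0 < π x) {part : Fin n → Fin k}
    (hpart : Function.Surjective part) (i : Fin k) : 0 < orbMass π part i := by
  obtain ⟨x, rfl⟩ := hpart i
  exact Finset.sum_pos (fun z _ => hπ z) ⟨x, by simp⟩

theorem sum_orbMass {n k : ℕ} (π : Fin n → ℝ) (part : Fin n → Fin k) :
    ∑ i, orbMass π part i = ∑ x, π x :=
  Finset.sum_fiberwise _ part π

theorem Matrix.vecMul_eq_self_of_reversible {n R : Type*} [Fintype n] [CommSemiring R]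
    {μ : n → R} {P : Matrix n n R} (hrev : ∀ i j, μ i * P i j = μ j * P j i)
    (hrow : ∀ i, ∑ j, P i j = 1) : μ ᵥ* P = μ := by
  ext j
  calc (μ ᵥ* P) j = ∑ i, μ j * P j i := Finset.sum_congr rfl fun i _ => hrev i j
    _ = μ j := by rw [← Finset.mul_sum, hrow, mul_one]

theorem Matrix.mem_spectrum_iff_exists_mulVec_eq_smul {K n : Type*} [Field K] [Fintype n]
    [DecidableEq n] (A : Matrix n n K) (r : K) :
    r ∈ spectrum K A ↔ ∃ v ≠ 0, A *ᵥ v = r • v := by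
  rw [← Matrix.spectrum_toLin', ← Module.End.hasEigenvalue_iff_mem_spectrum]
  constructor
  · intro h
    obtain ⟨v, hv, hv0⟩ := h.exists_hasEigenvector
    exact ⟨v, hv0, Module.End.mem_eigenspace_iff.mp hv⟩
  · rintro ⟨v, hv0, hv⟩
    exact Module.End.hasEigenvalue_of_hasEigenvector ⟨Module.End.mem_eigenspace_iff.mpr hv, hv0⟩

section starMatrix

variable {ι : Type*} [DecidableEq ι] (μ : ι → ℝ) (c : ι)

noncomputable def starMatrix : Matrix ι ι ℝ := fun i j =>
  if i ≠ c then (if j = c then 1 else 0)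
  else (if j = c then 2 - 1 / μ c else μ j / μ c)

variable {μ c}

theorem starMatrix_apply_of_ne {i : ι} (hi : i ≠ c) (j : ι) :
    starMatrix μ c i j = if j = c then 1 else 0 :=
  if_pos hi

theorem starMatrix_apply_hub (hc : μ c ≠ 0) (j : ι) :
    starMatrix μ c c j = μ j / μ c + if j = c then 1 - 1 / μ c else 0 := by
  by_cases hj : j = c
  · subst hj
    simp only [starMatrix, ne_eq, not_true_eq_false, if_false, if_true]
    field_simp
    ring
  · simp [starMatrix, hj]

theorem starMatrix_mulVec [Fintype ι] (hc : μ c ≠ 0) (v : ι → ℝ) :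
    starMatrix μ c *ᵥ v = fun i => if i = c then (1 - 1 / μ c) * v c + μ ⬝ᵥ v / μ c else v c := by
  ext i
  split_ifs with hi
  · subst hi
    simp only [mulVec, dotProduct, starMatrix_apply_hub hc, add_mul, sum_add_distrib, ite_mul,
      zero_mul, sum_ite_eq', mem_univ, if_true, sum_div, div_mul_eq_mul_div]
    ring
  · simp [mulVec, dotProduct, starMatrix_apply_of_ne hi]

theorem sum_starMatrix_apply [Fintype ι] (hsum : ∑ i, μ i = 1) (hc : μ c ≠ 0) (i : ι) :
    ∑ j, starMatrix μ c i j = 1 := by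
  have := congrFun (starMatrix_mulVec hc (fun _ => 1)) i
  simp only [mulVec, dotProduct, mul_one] at this
  rw [this, hsum]
  split_ifs
  · field_simp; ring
  · rfl

theorem starMatrix_nonneg (hμ : ∀ i, 0 ≤ μ i) (hc : 1 / 2 ≤ μ c) (i j : ι) :
    0 ≤ starMatrix μ c i j := by
  have hc0 : 0 < μ c := by linarith
  have hhub : 0 ≤ 2 - 1 / μ c := by
    rw [sub_nonneg, div_le_iff₀ hc0]
    linarith
  unfold starMatrix
  split_ifs
  exacts [zero_le_one, le_rfl, hhub, div_nonneg (hμ j) hc0.le]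

theorem starMatrix_reversible (hc : μ c ≠ 0) (i j : ι) :
    μ i * starMatrix μ c i j = μ j * starMatrix μ c j i := by
  by_cases hi : i = c <;> by_cases hj : j = c
  · rw [hi, hj]
  · subst hi
    simp [starMatrix, hj, mul_div_cancel₀ _ hc]
  · subst hj
    simp [starMatrix, hi, mul_div_cancel₀ _ hc]
  · simp [starMatrix, hi, hj]

theorem vecMul_starMatrix [Fintype ι] (hsum : ∑ i, μ i = 1) (hc : μ c ≠ 0) :
    μ ᵥ* starMatrix μ c = μ :=
  vecMul_eq_self_of_reversible (starMatrix_reversible hc) (sum_starMatrix_apply hsum hc)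

theorem eq_of_starMatrix_mulVec_eq_smul [Fintype ι] (hsum : ∑ i, μ i = 1) (hc : μ c ≠ 0)
    {v : ι → ℝ} (hv0 : v ≠ 0) {r : ℝ} (hv : starMatrix μ c *ᵥ v = r • v) :
    r = 1 ∨ r = 0 ∨ r = 1 - 1 / μ c := by
  have hrow : ∀ i, i ≠ c → v c = r * v i := fun i hi => by
    simpa [starMatrix_mulVec hc, hi] using congrFun hv i
  have hhub : (1 - 1 / μ c) * v c + μ ⬝ᵥ v / μ c = r * v c := by
    simpa [starMatrix_mulVec hc] using congrFun hv c
  have hdot : r * (μ ⬝ᵥ v) = μ ⬝ᵥ v := by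
    rw [← smul_eq_mul, ← dotProduct_smul, ← hv, dotProduct_mulVec, vecMul_starMatrix hsum hc]
  by_contra! ⟨h1, h0, hr⟩
  have hμv : μ ⬝ᵥ v = 0 := by
    have : (r - 1) * (μ ⬝ᵥ v) = 0 := by linear_combination hdot
    exact (mul_eq_zero.mp this).resolve_left (sub_ne_zero.mpr h1)
  have hvc : v c = 0 := by
    have : (r - (1 - 1 / μ c)) * v c = 0 := by linear_combination -hhub + hμv / μ c
    exact (mul_eq_zero.mp this).resolve_left (sub_ne_zero.mpr hr)
  refine hv0 (funext fun i => ?_)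
  by_cases hi : i = c
  · rw [hi, hvc, Pi.zero_apply]
  · have := hrow i hi
    rw [hvc, eq_comm, mul_eq_zero] at this
    exact this.resolve_left h0

theorem one_mem_spectrum_starMatrix [Fintype ι] [Nonempty ι] (hsum : ∑ i, μ i = 1)
    (hc : μ c ≠ 0) : 1 ∈ spectrum ℝ (starMatrix μ c) := by
  refine (mem_spectrum_iff_exists_mulVec_eq_smul _ _).mpr ⟨1, one_ne_zero, funext fun i => ?_⟩
  simpa [mulVec, dotProduct] using sum_starMatrix_apply hsum hc i

theorem zero_mem_spectrum_starMatrix [Fintype ι] (hc : μ c ≠ 0) {a b : ι} (ha : a ≠ c)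
    (hb : b ≠ c) (hab : a ≠ b) (hμb : μ b ≠ 0) : 0 ∈ spectrum ℝ (starMatrix μ c) := by
  refine (mem_spectrum_iff_exists_mulVec_eq_smul _ _).mpr
    ⟨Pi.single a (μ b) - Pi.single b (μ a), fun h => hμb ?_, ?_⟩
  · simpa [hab] using congrFun h a
  · have hμv : μ ⬝ᵥ (Pi.single a (μ b) - Pi.single b (μ a)) = 0 := by
      simp [dotProduct_sub, mul_comm]
    rw [starMatrix_mulVec hc, hμv, zero_smul]
    ext i
    simp [ha.symm, hb.symm]

theorem one_sub_inv_mem_spectrum_starMatrix [Fintype ι] (hsum : ∑ i, μ i = 1) (hc : μ c ≠ 0)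
    {a : ι} (ha : a ≠ c) : 1 - 1 / μ c ∈ spectrum ℝ (starMatrix μ c) := by
  refine (mem_spectrum_iff_exists_mulVec_eq_smul _ _).mpr
    ⟨1 - Pi.single c (1 / μ c), fun h => ?_, ?_⟩
  · simpa [ha] using congrFun h a
  · have hμv : μ ⬝ᵥ (1 - Pi.single c (1 / μ c)) = 0 := by
      simp [dotProduct_sub, dotProduct_one, hsum, hc]
    rw [starMatrix_mulVec hc, hμv]
    ext i
    by_cases hi : i = c <;> simp [hi]

theorem spectrum_starMatrix [Fintype ι] (hsum : ∑ i, μ i = 1) (hμ : ∀ i, μ i ≠ 0)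
    (hcard : 3 ≤ Fintype.card ι) : spectrum ℝ (starMatrix μ c) = {1, 0, 1 - 1 / μ c} := by
  have : 1 < (univ.erase c).card := by
    rw [card_erase_of_mem (mem_univ c), card_univ]
    omega
  obtain ⟨a, ha, b, hb, hab⟩ := one_lt_card.mp this
  ext r
  refine ⟨fun hr => ?_, fun hr => ?_⟩
  · obtain ⟨v, hv0, hv⟩ := (mem_spectrum_iff_exists_mulVec_eq_smul _ _).mp hr
    exact eq_of_starMatrix_mulVec_eq_smul hsum (hμ c) hv0 hv
  · obtain rfl | rfl | rfl := hr
    · have : Nonempty ι := ⟨c⟩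
      exact one_mem_spectrum_starMatrix hsum (hμ c)
    · exact zero_mem_spectrum_starMatrix (hμ c) (ne_of_mem_erase ha) (ne_of_mem_erase hb) hab (hμ b)
    · exact one_sub_inv_mem_spectrum_starMatrix hsum (hμ c) (ne_of_mem_erase ha)

end starMatrix

theorem stmt16_general {n k : ℕ} (hk3 : 3 ≤ k)
    (π : Fin n → ℝ) (hπpos : ∀ x, 0 < π x) (hπsum : ∑ x, π x = 1)
    (part : Fin n → Fin k) (hpart : Function.Surjective part)
    (last : Fin k)
    (hhalf : 1 / 2 < orbMass π part last)
    (Pb : Matrix (Fin k) (Fin k) ℝ)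
    (hPb : ∀ i j : Fin k, Pb i j =
      if i ≠ last then (if j = last then 1 else 0)
      else (if j = last then 2 - 1 / orbMass π part last
            else orbMass π part j / orbMass π part last)) :
    ((∀ i j, 0 ≤ Pb i j) ∧ (∀ i, ∑ j, Pb i j = 1)) ∧
      (∀ i j, orbMass π part i * Pb i j = orbMass π part j * Pb j i) ∧
      (∀ j, ∑ i, orbMass π part i * Pb i j = orbMass π part j) ∧
      spectrum ℝ Pb = ({1, 0, 1 - 1 / orbMass π part last} : Set ℝ) := by
  obtain rfl : Pb = starMatrix (orbMass π part) last := Matrix.ext hPb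
  have hpos := orbMass_pos hπpos hpart
  have hsum : ∑ i, orbMass π part i = 1 := (sum_orbMass π part).trans hπsum
  have hlast := (hpos last).ne'
  refine ⟨⟨starMatrix_nonneg (fun i => (hpos i).le) hhalf.le, sum_starMatrix_apply hsum hlast⟩,
    starMatrix_reversible hlast, fun j => congrFun (vecMul_starMatrix hsum hlast) j,
    spectrum_starMatrix hsum (fun i => (hpos i).ne') (by simpa using hk3)⟩

/-- for `k ≥ 3` orbits with non-decreasing masses and
`π(O_k) > 1/2`, the star-type matrix `P̄` is stochastic, `π̄`-reversible (hence
`π̄`-stationary), and its spectrum is `{1, 0, 1 − 1/π(O_k)}`. -/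
theorem stmt16 {n k : ℕ} (hn : 0 < n) (hk3 : 3 ≤ k)
    (π : Fin n → ℝ) (hπpos : ∀ x, 0 < π x) (hπsum : ∑ x, π x = 1)
    (part : Fin n → Fin k) (hpart : Function.Surjective part)
    (hmono : ∀ i j : Fin k, i ≤ j → orbMass π part i ≤ orbMass π part j)
    (last : Fin k) (hlast : (last : ℕ) = k - 1)
    (hhalf : 1 / 2 < orbMass π part last)
    (Pb : Matrix (Fin k) (Fin k) ℝ)
    (hPb : ∀ i j : Fin k, Pb i j =
      if i ≠ last then (if j = last then 1 else 0)
      else (if j = last then 2 - 1 / orbMass π part last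
            else orbMass π part j / orbMass π part last)) :
    ((∀ i j, 0 ≤ Pb i j) ∧ (∀ i, ∑ j, Pb i j = 1)) ∧
      (∀ i j, orbMass π part i * Pb i j = orbMass π part j * Pb j i) ∧
      (∀ j, ∑ i, orbMass π part i * Pb i j = orbMass π part j) ∧
      spectrum ℝ Pb = ({1, 0, 1 - 1 / orbMass π part last} : Set ℝ) :=
  stmt16_general hk3 π hπpos hπsum part hpart last hhalf Pb hPb
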